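/- arXiv:1503.02791 — 3 statements merged into one kernel-verified Lean document; each statement's English description precedes it below -/
import Mathlib

section
/- Each entry h_{i j̄} of the matrix h is a continuous function on E_{2m}, and, regarded as a function of the 2n real coordinates (the real and imaginary parts of z_1, …, z_n), each entry is real analytic on E_{2m} \ Z = { z ∈ E_{2m} : z_1 ≠ 0 }. -/
open scoped ComplexOrder

noncomputable section

/-- The pseudo-egg `E_{2m} ⊆ ℂ^n`, `n = N + 2`, coordinates indexed by `Fin (N+2)`
with `z 0` playing the role of `z₁`. -/
def E2m (N : ℕ) (m : ℝ) : Set (Fin (N + 2) → ℂ) :=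
  {z | ‖z 0‖ ^ (2 * m) + ∑ j ∈ Finset.Ioi (0 : Fin (N + 2)), ‖z j‖ ^ 2 < 1}

/-- The entries `h_{i j̄}` of the Wu metric of `E_{2m}` (index `0` plays the role of `1`). -/
def hEnt (N : ℕ) (m : ℝ) (z : Fin (N + 2) → ℂ) (i j : Fin (N + 2)) : ℂ :=
  let A : ℝ := 1 - ∑ l ∈ Finset.Ioi (0 : Fin (N + 2)), ‖z l‖ ^ 2
  let B : ℝ := A ^ (1 / m)
  let C : ℝ := (B - ‖z 0‖ ^ 2) ^ 2
  if i = 0 then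
    if j = 0 then ((B / C : ℝ) : ℂ)
    else ((A ^ (-1 + 1 / m) / (m * C) : ℝ) : ℂ) * (starRingEnd ℂ) (z 0) * z j
  else if j = 0 then ((A ^ (-1 + 1 / m) / (m * C) : ℝ) : ℂ) * z 0 * (starRingEnd ℂ) (z i)
  else if i = j then
    ((A ^ (-2 + 1 / m) * ‖z 0‖ ^ 2 * ‖z i‖ ^ 2 / (m ^ 2 * C) +
      (A + ‖z i‖ ^ 2) / (A * (A - ‖z 0‖ ^ (2 * m))) : ℝ) : ℂ)
  else
    ((A ^ (-2 + 1 / m) * ‖z 0‖ ^ 2 / (m ^ 2 * C) : ℝ) : ℂ) *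
        (starRingEnd ℂ) (z i) * z j +
      ((1 / (A * (A - ‖z 0‖ ^ (2 * m))) : ℝ) : ℂ) * (starRingEnd ℂ) (z i) * z j

/-!
Every entry is built by sums, products, quotients, conjugation and coordinates from
`|z_l|²`, real powers of `A = 1 - |ẑ|²`, and the single term `|z₁|^{2m}`. On `E_{2m}` one has
`A > |z₁|^{2m} ≥ 0`, hence also `A^{1/m} > |z₁|²`, so every denominator and every base of a real
power is positive and those ingredients are real analytic. An entry is therefore as regular at a
point as `|z₁|^{2m}` is: continuous everywhere, since `m > 0`, and real analytic where `z₁ ≠ 0`.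
-/

open scoped ContDiff

@[fun_prop]
lemma Complex.contDiff_conj {n : WithTop ℕ∞} : ContDiff ℝ n (starRingEnd ℂ) :=
  conjCLE.contDiff

@[fun_prop]
lemma Complex.contDiff_ofReal {n : WithTop ℕ∞} : ContDiff ℝ n ofReal :=
  ofRealCLM.contDiff

@[fun_prop]
lemma Complex.contDiff_normSq {n : WithTop ℕ∞} : ContDiff ℝ n normSq := by
  rw [show ⇑normSq = fun z : ℂ => ‖z‖ ^ 2 from funext normSq_eq_norm_sq]
  exact contDiff_norm_sq ℝ

lemma contDiffAt_norm_apply_rpow {ι E : Type*} [Fintype ι] [NormedAddCommGroup E]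
    [InnerProductSpace ℝ E] (p : ℝ) {k : ι} {z : ι → E} (hz : z k ≠ 0) :
    ContDiffAt ℝ ω (fun z : ι → E => ‖z k‖ ^ p) z :=
  (Real.contDiffAt_rpow_const_of_ne (norm_ne_zero_iff.2 hz)).comp z
    ((contDiffAt_norm ℝ hz).comp z (contDiff_apply ℝ E k).contDiffAt)

section E2m

variable {N : ℕ} {m : ℝ} {z : Fin (N + 2) → ℂ}

lemma sub_norm_rpow_pos_of_mem_E2m (hz : z ∈ E2m N m) :
    0 < 1 - ∑ l ∈ Finset.Ioi (0 : Fin (N + 2)), ‖z l‖ ^ 2 - ‖z 0‖ ^ (2 * m) := by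
  rw [E2m, Set.mem_ofPred_eq] at hz
  linarith

lemma one_sub_sum_norm_sq_pos_of_mem_E2m (hz : z ∈ E2m N m) :
    0 < 1 - ∑ l ∈ Finset.Ioi (0 : Fin (N + 2)), ‖z l‖ ^ 2 := by
  have := sub_norm_rpow_pos_of_mem_E2m hz
  have : 0 ≤ ‖z 0‖ ^ (2 * m) := by positivity
  linarith

lemma sub_norm_sq_pos_of_mem_E2m (hm : 0 < m) (hz : z ∈ E2m N m) :
    0 < (1 - ∑ l ∈ Finset.Ioi (0 : Fin (N + 2)), ‖z l‖ ^ 2) ^ (1 / m) - ‖z 0‖ ^ 2 := by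
  have h : (‖z 0‖ ^ (2 * m)) ^ (1 / m) = ‖z 0‖ ^ 2 := by
    rw [← Real.rpow_mul (norm_nonneg _), show 2 * m * (1 / m) = 2 by field_simp, Real.rpow_two]
  rw [sub_pos, ← h]
  exact Real.rpow_lt_rpow (by positivity) (by linarith [sub_norm_rpow_pos_of_mem_E2m hz])
    (by positivity)

lemma contDiffAt_hEnt {n : WithTop ℕ∞} (hm : 0 < m) (hz : z ∈ E2m N m)
    (hT : ContDiffAt ℝ n (fun z : Fin (N + 2) → ℂ => ‖z 0‖ ^ (2 * m)) z) (i j : Fin (N + 2)) :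
    ContDiffAt ℝ n (fun z => hEnt N m z i j) z := by
  have hA := one_sub_sum_norm_sq_pos_of_mem_E2m hz
  have hAT := sub_norm_rpow_pos_of_mem_E2m hz
  have hB := sub_norm_sq_pos_of_mem_E2m hm hz
  -- `fun_prop` knows `normSq`, not `‖·‖ ^ 2`; `positivity` then finds `hA`, `hAT`, `hB` verbatim.
  simp only [← Complex.normSq_eq_norm_sq] at hA hAT hB
  simp only [hEnt, ← Complex.normSq_eq_norm_sq]
  split_ifs <;> fun_prop (disch := positivity)

end E2m

theorem statement13_general (N : ℕ) (m : ℝ) (hm0 : 0 < m) (i j : Fin (N + 2)) :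
    ContinuousOn (fun z => hEnt N m z i j) (E2m N m) ∧
    AnalyticOnNhd ℝ (fun z => hEnt N m z i j) {z ∈ E2m N m | z 0 ≠ 0} := by
  constructor
  · intro z hz
    have hT : ContDiff ℝ 0 (fun z : Fin (N + 2) → ℂ => ‖z 0‖ ^ (2 * m)) := contDiff_zero.2 <|
      (continuous_norm.comp (continuous_apply 0)).rpow_const fun _ => Or.inr (by positivity)
    exact (contDiffAt_hEnt hm0 hz hT.contDiffAt i j).continuousAt.continuousWithinAt
  · rintro z ⟨hz, hz0⟩
    exact (contDiffAt_hEnt hm0 hz (contDiffAt_norm_apply_rpow _ hz0) i j).analyticAt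

/-- Each entry `h_{i j̄}` of the Wu metric matrix is continuous on `E_{2m}` and, regarded
as a function of the `2n` real coordinates (i.e. real-analytically, over `ℝ`), is real
analytic on `E_{2m} \ Z = { z ∈ E_{2m} : z₁ ≠ 0 }`. -/
theorem statement13 (N : ℕ) (m : ℝ) (hm0 : 0 < m) (hm : m < 1 / 2) (i j : Fin (N + 2)) :
    ContinuousOn (fun z => hEnt N m z i j) (E2m N m) ∧
    AnalyticOnNhd ℝ (fun z => hEnt N m z i j) {z ∈ E2m N m | z 0 ≠ 0} :=
  statement13_general N m hm0 i j
end
end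

section
/- For every point a ∈ Z, the function z ↦ h_{2 2̄}(z), regarded as a function of the 2n real coordinates, is not (Fréchet) differentiable at a. In particular, the Wu metric of E_{2m} is not C¹-smooth at any point of Z. -/
/-!
Restrict `h_{2 2̄}` to the real `z₁`-axis `t ↦ a + t e₁` through `a ∈ Z`. With
`A = 1 - |â|² > 0`, the first summand is smooth in `t`, and the second is
`(A + |a₂|²) / (A (A - |t|^{2m}))`. If `h_{2 2̄}` were differentiable at `a`, inverting the second
summand would make `|t|^{2m}` differentiable at `0`, which fails because `0 < 2m < 1`.
-/

open scoped ComplexOrder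

noncomputable section

open Function Filter Topology

theorem not_differentiableAt_abs_rpow_zero {p : ℝ} (hp0 : 0 < p) (hp1 : p < 1) :
    ¬ DifferentiableAt ℝ (fun t : ℝ => |t| ^ p) 0 := by
  intro h
  -- for `t > 0` the difference quotient at `0` is `t ^ (p - 1)`, which tends to `∞` as `t → 0⁺`
  have hslope : Tendsto (fun t : ℝ => t ^ (p - 1)) (𝓝[>] 0)
      (𝓝 (deriv (fun t : ℝ => |t| ^ p) 0)) := by
    refine tendsto_nhdsWithin_congr (fun t (ht : 0 < t) => ?_)
      h.hasDerivAt.tendsto_slope_zero_right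
    rw [zero_add, abs_zero, Real.zero_rpow hp0.ne', sub_zero, abs_of_pos ht, smul_eq_mul,
      Real.rpow_sub_one ht.ne', inv_mul_eq_div]
  exact not_tendsto_nhds_of_tendsto_atTop (tendsto_rpow_neg_nhdsGT_zero (by linarith)) _ hslope

theorem differentiableAt_of_differentiableAt_div_sub {𝕜 E : Type*} [NontriviallyNormedField 𝕜]
    [NormedAddCommGroup E] [NormedSpace 𝕜 E] {u : E → 𝕜} {x : E} {k A : 𝕜}
    (hk : k ≠ 0) (hx : u x ≠ A) (h : DifferentiableAt 𝕜 (fun y => k / (A - u y)) x) :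
    DifferentiableAt 𝕜 u x := by
  have hinv := (h.inv (div_ne_zero hk (sub_ne_zero.2 hx.symm))).const_mul k
  -- `u y = A - k * (k / (A - u y))⁻¹` holds for every `y`, also where `u y = A` since `0⁻¹ = 0`
  refine ((differentiableAt_const A).sub hinv).congr_of_eventuallyEq
    (Eventually.of_forall fun y => ?_)
  simp only [Pi.sub_apply, Pi.inv_apply]
  rw [inv_div, mul_div_cancel₀ _ hk, sub_sub_cancel]

def hatNormSq {N : ℕ} (z : Fin (N + 2) → ℂ) : ℝ :=
  ∑ l ∈ Finset.Ioi (0 : Fin (N + 2)), ‖z l‖ ^ 2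

theorem hatNormSq_lt_one {N : ℕ} {m : ℝ} {z : Fin (N + 2) → ℂ} (hz : z ∈ E2m N m) :
    hatNormSq z < 1 :=
  (le_add_of_nonneg_left (Real.rpow_nonneg (norm_nonneg (z 0)) (2 * m))).trans_lt hz

theorem hatNormSq_update_zero {N : ℕ} (z : Fin (N + 2) → ℂ) (w : ℂ) :
    hatNormSq (update z 0 w) = hatNormSq z :=
  Finset.sum_congr rfl fun l hl => by rw [update_of_ne (Finset.mem_Ioi.1 hl).ne']

theorem hEnt_one_one (N : ℕ) (m : ℝ) (z : Fin (N + 2) → ℂ) :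
    hEnt N m z 1 1 =
      (((1 - hatNormSq z) ^ (-2 + 1 / m) * ‖z 0‖ ^ 2 * ‖z 1‖ ^ 2 /
          (m ^ 2 * ((1 - hatNormSq z) ^ (1 / m) - ‖z 0‖ ^ 2) ^ 2) +
        (1 - hatNormSq z + ‖z 1‖ ^ 2) /
          ((1 - hatNormSq z) * (1 - hatNormSq z - ‖z 0‖ ^ (2 * m))) : ℝ) : ℂ) := by
  simp [hEnt, hatNormSq]

theorem differentiableAt_update_ofReal {N : ℕ} (a : Fin (N + 2) → ℂ) (i : Fin (N + 2)) (s : ℝ) :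
    DifferentiableAt ℝ (fun t : ℝ => update a i (t : ℂ)) s :=
  (hasFDerivAt_update (𝕜 := ℝ) a _).differentiableAt.comp s Complex.ofRealCLM.differentiableAt

/-- For every point `a ∈ Z` (i.e. `a ∈ E_{2m}` with `a₁ = 0`), the entry `h_{2 2̄}` of the
Wu metric, regarded as a function of the `2n` real coordinates, is not Fréchet
differentiable at `a`; in particular the Wu metric is not `C¹` at any point of `Z`. -/
theorem statement14 (N : ℕ) (m : ℝ) (hm0 : 0 < m) (hm : m < 1 / 2)
    (a : Fin (N + 2) → ℂ) (ha : a ∈ E2m N m) (ha0 : a 0 = 0) :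
    ¬ DifferentiableAt ℝ (fun z => hEnt N m z 1 1) a := by
  intro hF
  set A := 1 - hatNormSq a with hAdef
  have hA : 0 < A := sub_pos.2 (hatNormSq_lt_one ha)
  have hline : DifferentiableAt ℝ (fun t : ℝ => (hEnt N m (update a 0 t) 1 1).re) 0 := by
    have hF' : DifferentiableAt ℝ (fun z => hEnt N m z 1 1) (update a 0 ((0 : ℝ) : ℂ)) := by
      rwa [Complex.ofReal_zero, ← ha0, update_eq_self]
    exact Complex.reCLM.differentiableAt.comp 0
      (hF'.comp (f := fun t : ℝ => update a 0 (t : ℂ)) 0 (differentiableAt_update_ofReal a 0 0))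
  have hsmooth : DifferentiableAt ℝ (fun t : ℝ =>
      A ^ (-2 + 1 / m) * t ^ 2 * ‖a 1‖ ^ 2 / (m ^ 2 * (A ^ (1 / m) - t ^ 2) ^ 2)) 0 :=
    (by fun_prop : DifferentiableAt ℝ _ _).div (by fun_prop)
      (by simp [hm0.ne', (Real.rpow_pos_of_pos hA _).ne'])
  have hsingular : DifferentiableAt ℝ
      (fun t : ℝ => (A + ‖a 1‖ ^ 2) / A / (A - |t| ^ (2 * m))) 0 := by
    refine (hline.sub hsmooth).congr_of_eventuallyEq (Eventually.of_forall fun t => ?_)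
    simp only [Pi.sub_apply, hEnt_one_one, hatNormSq_update_zero, update_self,
      update_of_ne one_ne_zero, Complex.ofReal_re, Complex.norm_real, Real.norm_eq_abs, sq_abs,
      div_mul_eq_div_div, ← hAdef]
    ring
  have hvertex : |(0 : ℝ)| ^ (2 * m) ≠ A := by
    rw [abs_zero, Real.zero_rpow (by positivity)]
    exact hA.ne
  exact not_differentiableAt_abs_rpow_zero (by positivity) (by linarith)
    (differentiableAt_of_differentiableAt_div_sub (by positivity) hvertex hsingular)
end
end

section
/- For every z_1 ∈ ℂ with 0 < |z_1| < 1, at the point (z_1, 0̂) ∈ E_{2m} one has ∂h_{1 2̄}/∂z_2 (z_1, 0̂) ≠ ∂h_{2 2̄}/∂z_1 (z_1, 0̂), where the derivatives are Wirtinger derivatives. -/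
open scoped ComplexOrder

noncomputable section

/-- Wirtinger derivative `∂f/∂z_k = (1/2)(∂f/∂x_k − i ∂f/∂y_k)`. -/
def wirt (N : ℕ) (f : (Fin (N + 2) → ℂ) → ℂ) (z : Fin (N + 2) → ℂ) (k : Fin (N + 2)) : ℂ :=
  (1 / 2) * (fderiv ℝ f z (Pi.single k 1) - Complex.I * fderiv ℝ f z (Pi.single k Complex.I))

/-- Wirtinger derivative `∂f/∂z̄_k = (1/2)(∂f/∂x_k + i ∂f/∂y_k)`. -/
def wirtBar (N : ℕ) (f : (Fin (N + 2) → ℂ) → ℂ) (z : Fin (N + 2) → ℂ) (k : Fin (N + 2)) : ℂ :=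
  (1 / 2) * (fderiv ℝ f z (Pi.single k 1) + Complex.I * fderiv ℝ f z (Pi.single k Complex.I))

/-!
Both derivatives are taken along a coordinate line through `(z₁, 0̂)`. On the `z₂`-line,
`h_{12̄} = g(z₂) z₂` with `g` continuous, so `∂h_{12̄}/∂z₂ = g(0) = z̄₁ / (m (1 - s)²)`, `s = |z₁|²`.
On the `z₁`-line `ẑ = 0` and `h_{22̄} = 1 / (1 - s^m)`, so `∂h_{22̄}/∂z₁ = m s^(m-1) z̄₁ / (1 - s^m)²`.
With `s = e^(-2t)` the strict inequality `(1 - s^m)² < m² s^(m-1) (1 - s)²` becomes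
`sinh (m t) < m sinh t`, i.e. strict convexity of `sinh` on `[0, ∞)`.
-/

section

open Real

lemma Real.strictConvexOn_sinh : StrictConvexOn ℝ (Set.Ici 0) sinh := by
  refine strictConvexOn_of_deriv2_pos (convex_Ici 0) continuous_sinh.continuousOn fun x hx => ?_
  have h2 : deriv^[2] sinh = sinh := by
    ext y
    simp [Function.iterate_succ, deriv_sinh, deriv_cosh]
  rw [interior_Ici] at hx
  rw [h2]; exact sinh_pos_iff.2 hx

lemma Real.sinh_mul_lt_mul_sinh {m t : ℝ} (hm0 : 0 < m) (hm1 : m < 1) (ht : 0 < t) :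
    sinh (m * t) < m * sinh t := by
  simpa using strictConvexOn_sinh.2 Set.self_mem_Ici (Set.mem_Ici.2 ht.le) ht.ne
    (by linarith : (0 : ℝ) < 1 - m) hm0 (by ring)

lemma one_sub_rpow_lt_mul_rpow_mul_one_sub {m s : ℝ} (hm0 : 0 < m) (hm1 : m < 1) (hs0 : 0 < s)
    (hs1 : s < 1) : 1 - s ^ m < m * s ^ ((m - 1) / 2) * (1 - s) := by
  set t := -log s / 2
  have ht : 0 < t := by have := log_neg hs0 hs1; simp only [t]; linarith
  have hpow : ∀ x : ℝ, s ^ x = exp (-(2 * t * x)) := fun x => by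
    rw [rpow_def_of_pos hs0]; congr 1; simp only [t]; ring
  have hlhs : 1 - s ^ m = 2 * exp (-(m * t)) * sinh (m * t) := by
    have h1 : exp (-(m * t)) * exp (m * t) = 1 := by rw [← exp_add]; simp
    have h2 : exp (-(m * t)) * exp (-(m * t)) = exp (-(2 * t * m)) := by rw [← exp_add]; ring_nf
    rw [hpow, sinh_eq]
    linear_combination -h1 + h2
  have hrhs : m * s ^ ((m - 1) / 2) * (1 - s) = 2 * exp (-(m * t)) * (m * sinh t) := by
    have h1 : exp (-(m * t)) * exp t = exp (-(2 * t * ((m - 1) / 2))) := by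
      rw [← exp_add]; ring_nf
    have h2 : exp (-(m * t)) * exp (-t) = exp (-(2 * t * ((m - 1) / 2))) * exp (-(2 * t * 1)) := by
      simp only [← exp_add]; ring_nf
    conv_lhs => rw [hpow, ← rpow_one s, hpow]
    rw [sinh_eq]
    linear_combination -m * h1 + m * h2
  rw [hlhs, hrhs]
  exact mul_lt_mul_of_pos_left (sinh_mul_lt_mul_sinh hm0 hm1 ht) (by positivity)

lemma one_div_mul_one_sub_sq_lt {m s : ℝ} (hm0 : 0 < m) (hm1 : m < 1) (hs0 : 0 < s) (hs1 : s < 1) :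
    1 / (m * (1 - s) ^ 2) < m * s ^ (m - 1) / (1 - s ^ m) ^ 2 := by
  have hsm : 0 < 1 - s ^ m := by linarith [rpow_lt_one hs0.le hs1 hm0]
  have hsq : s ^ (m - 1) = s ^ ((m - 1) / 2) * s ^ ((m - 1) / 2) := by
    rw [← rpow_add hs0]; ring_nf
  rw [div_lt_div_iff₀ (by positivity) (by positivity), one_mul, hsq]
  have := pow_lt_pow_left₀ (one_sub_rpow_lt_mul_rpow_mul_one_sub hm0 hm1 hs0 hs1) hsm.le two_ne_zero
  linarith

end

open Complex ComplexConjugate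

@[fun_prop]
lemma Complex.differentiable_normSq : Differentiable ℝ normSq := by
  have : normSq = fun w : ℂ => reCLM w * reCLM w + imCLM w * imCLM w := by
    funext w; simp [normSq_apply]
  rw [this]; fun_prop

@[fun_prop]
lemma DifferentiableAt.ofReal_comp {E : Type*} [NormedAddCommGroup E] [NormedSpace ℝ E] {f : E → ℝ}
    {x : E} (hf : DifferentiableAt ℝ f x) : DifferentiableAt ℝ (fun y => (f y : ℂ)) x :=
  ofRealCLM.differentiableAt.comp x hf

lemma Complex.norm_rpow_two_mul (w : ℂ) (m : ℝ) : ‖w‖ ^ (2 * m) = normSq w ^ m := by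
  rw [Real.rpow_mul (norm_nonneg w), normSq_eq_norm_sq]; norm_cast

def wirtinger (g : ℂ → ℂ) (w : ℂ) : ℂ :=
  (1 / 2) * (fderiv ℝ g w 1 - I * fderiv ℝ g w I)

lemma wirtinger_eq_of_hasDerivAt {g : ℂ → ℂ} {g' w : ℂ} (hg : HasDerivAt g g' w) :
    wirtinger g w = g' := by
  simp only [wirtinger, hg.hasFDerivAt.restrictScalars ℝ |>.fderiv]
  simp only [ContinuousLinearMap.coe_restrictScalars', ContinuousLinearMap.toSpanSingleton_apply,
    smul_eq_mul, one_mul]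
  linear_combination (-g' / 2) * I_mul_I

lemma wirtinger_ofReal_comp_normSq {F : ℝ → ℝ} {F' : ℝ} {w : ℂ} (hF : HasDerivAt F F' (normSq w)) :
    wirtinger (fun w => (F (normSq w) : ℂ)) w = F' * conj w := by
  rw [normSq_eq_norm_sq] at hF
  have h := ofRealCLM.hasFDerivAt.comp w
    (hF.hasFDerivAt.comp w (hasStrictFDerivAt_norm_sq w).hasFDerivAt)
  rw [wirtinger, show (fun w => (F (normSq w) : ℂ)) = ofRealCLM ∘ F ∘ fun w => ‖w‖ ^ 2 by
    ext w; simp [normSq_eq_norm_sq], h.fderiv]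
  apply Complex.ext <;> simp [Complex.inner] <;> ring

lemma hasDerivAt_mul_id_zero {g : ℂ → ℂ} (hg : ContinuousAt g 0) :
    HasDerivAt (fun w => g w * w) (g 0) 0 := by
  rw [hasDerivAt_iff_tendsto_slope]
  refine (hg.tendsto.mono_left nhdsWithin_le_nhds).congr' ?_
  filter_upwards [self_mem_nhdsWithin] with w hw
  simp [slope_def_field, mul_div_assoc, div_self hw]

lemma wirt_eq_wirtinger_update {N : ℕ} {f : (Fin (N + 2) → ℂ) → ℂ} {z : Fin (N + 2) → ℂ}
    (hf : DifferentiableAt ℝ f z) (k : Fin (N + 2)) :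
    wirt N f z k = wirtinger (fun w => f (Function.update z k w)) (z k) := by
  have hf' : HasFDerivAt f (fderiv ℝ f z) (Function.update z k (z k)) := by
    rw [Function.update_eq_self]; exact hf.hasFDerivAt
  have hcomp := hf'.comp (z k) (hasFDerivAt_update (𝕜 := ℝ) z (z k))
  rw [wirt, wirtinger, show (fun w => f (Function.update z k w)) = f ∘ Function.update z k from rfl,
    hcomp.fderiv]
  have hsingle (v : ℂ) :
      (fun i => (Pi.single k (ContinuousLinearMap.id ℝ ℂ) : Fin (N + 2) → ℂ →L[ℝ] ℂ) i v) =
        Pi.single k v := by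
    ext i; rcases eq_or_ne i k with rfl | h <;> simp [*]
  simp [hsingle]

lemma differentiableAt_hEnt {N : ℕ} {m : ℝ} (hm : 0 < m) {z : Fin (N + 2) → ℂ} (hz : z ∈ E2m N m)
    (hz0 : z 0 ≠ 0) (i j : Fin (N + 2)) : DifferentiableAt ℝ (fun w => hEnt N m w i j) z := by
  have hlt : normSq (z 0) ^ m < 1 - ∑ l ∈ Finset.Ioi 0, normSq (z l) := by
    simp only [E2m, Set.mem_ofPred_eq, norm_rpow_two_mul, Complex.sq_norm] at hz
    linarith
  have hA : 0 < 1 - ∑ l ∈ Finset.Ioi 0, normSq (z l) :=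
    (Real.rpow_nonneg (normSq_nonneg _) m).trans_lt hlt
  have hB : normSq (z 0) < (1 - ∑ l ∈ Finset.Ioi 0, normSq (z l)) ^ (1 / m) := by
    rw [one_div, Real.lt_rpow_inv_iff_of_pos (normSq_nonneg _) hA.le hm]
    exact hlt
  have hA₀ := hA.ne'
  have hB₀ : (1 - ∑ l ∈ Finset.Ioi 0, normSq (z l)) ^ (1 / m) - normSq (z 0) ≠ 0 := by linarith
  have hD₀ : 1 - ∑ l ∈ Finset.Ioi 0, normSq (z l) - normSq (z 0) ^ m ≠ 0 := by linarith
  have hz₀ : normSq (z 0) ≠ 0 := normSq_eq_zero.not.mpr hz0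
  have hm₀ := hm.ne'
  -- `‖w‖ ^ 2` is rewritten to `normSq w`: `fun_prop` would otherwise go through `‖w‖`,
  -- which is not differentiable at `0`.
  by_cases hi : i = 0 <;> by_cases hj : j = 0 <;> by_cases hij : i = j <;>
    simp only [hEnt, hi, hj, hij, if_true, if_false, norm_rpow_two_mul, Complex.sq_norm] <;>
    fun_prop (disch := (try dsimp only); simp only [ne_eq, mul_eq_zero, pow_eq_zero_iff,
      two_ne_zero, not_false_eq_true, not_or]; tauto)

lemma sum_Ioi_norm_sq_eq_zero {N : ℕ} {z : Fin (N + 2) → ℂ} (hz : ∀ l ≠ 0, z l = 0) :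
    ∑ l ∈ Finset.Ioi 0, ‖z l‖ ^ 2 = 0 :=
  Finset.sum_eq_zero fun l hl => by simp [hz l (Finset.mem_Ioi.mp hl).ne']

section CoordinateLines

variable {N : ℕ} (m : ℝ) (z₁ w : ℂ)

lemma hEnt_update_one_zero_one :
    hEnt N m (Function.update (Pi.single 0 z₁) 1 w) 0 1 =
      ((((1 - normSq w) ^ (-1 + 1 / m) / (m * ((1 - normSq w) ^ (1 / m) - normSq z₁) ^ 2) : ℝ) : ℂ) *
        conj z₁) * w := by
  have hsum : ∑ l ∈ Finset.Ioi (0 : Fin (N + 2)),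
      ‖Function.update (Pi.single 0 z₁ : Fin (N + 2) → ℂ) 1 w l‖ ^ 2 = normSq w := by
    rw [Finset.sum_eq_single 1, normSq_eq_norm_sq]
    · simp
    · intro l hl hl1; simp [hl1, (Finset.mem_Ioi.mp hl).ne']
    · simp
  simp only [hEnt, hsum, Fin.zero_lt_one.ne', if_true, if_false]
  simp [mul_assoc, normSq_eq_norm_sq]

lemma hEnt_update_zero_one_one :
    hEnt N m (Function.update (Pi.single 0 z₁) 0 w) 1 1 = (((1 - normSq w ^ m)⁻¹ : ℝ) : ℂ) := by
  have hsum := sum_Ioi_norm_sq_eq_zero (N := N) (z := Function.update (Pi.single 0 z₁) 0 w)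
    fun l hl => by simp [hl]
  simp only [hEnt, hsum, Fin.zero_lt_one.ne', if_true, if_false]
  simp [norm_rpow_two_mul]

variable {m z₁}

lemma wirtinger_hEnt_update_one_zero_one (hm : 0 < m) (hz₁ : normSq z₁ < 1) :
    wirtinger (fun w => hEnt N m (Function.update (Pi.single 0 z₁) 1 w) 0 1) 0 =
      ((1 / (m * (1 - normSq z₁) ^ 2) : ℝ) : ℂ) * conj z₁ := by
  simp_rw [hEnt_update_one_zero_one]
  have hg : DifferentiableAt ℝ (fun w => ((((1 - normSq w) ^ (-1 + 1 / m) /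
      (m * ((1 - normSq w) ^ (1 / m) - normSq z₁) ^ 2) : ℝ) : ℂ) * conj z₁)) 0 := by
    fun_prop (disch := simp [hm.ne', sub_ne_zero.mpr hz₁.ne'])
  rw [wirtinger_eq_of_hasDerivAt (hasDerivAt_mul_id_zero hg.continuousAt)]
  simp

lemma wirtinger_hEnt_update_zero_one_one (hm : 0 < m) (hz₀ : 0 < normSq z₁) (hz₁ : normSq z₁ < 1) :
    wirtinger (fun w => hEnt N m (Function.update (Pi.single 0 z₁) 0 w) 1 1) z₁ =
      ((m * normSq z₁ ^ (m - 1) / (1 - normSq z₁ ^ m) ^ 2 : ℝ) : ℂ) * conj z₁ := by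
  have hsm : normSq z₁ ^ m < 1 := Real.rpow_lt_one hz₀.le hz₁ hm
  have hF : HasDerivAt (fun t : ℝ => (1 - t ^ m)⁻¹)
      (m * normSq z₁ ^ (m - 1) / (1 - normSq z₁ ^ m) ^ 2) (normSq z₁) := by
    refine (((Real.hasDerivAt_rpow_const (Or.inl hz₀.ne')).const_sub 1).fun_inv
      (sub_ne_zero.mpr hsm.ne')).congr_deriv ?_
    ring
  simp_rw [hEnt_update_zero_one_one]
  exact wirtinger_ofReal_comp_normSq hF

end CoordinateLines

/-- For every `z₁ ∈ ℂ` with `0 < |z₁| < 1`, at the point `(z₁, 0̂) ∈ E_{2m}` the Wirtinger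
derivatives satisfy `∂h_{1 2̄}/∂z₂ (z₁,0̂) ≠ ∂h_{2 2̄}/∂z₁ (z₁,0̂)`. -/
theorem statement15 (N : ℕ) (m : ℝ) (hm0 : 0 < m) (hm : m < 1 / 2)
    (z₁ : ℂ) (hz0 : 0 < ‖z₁‖) (hz1 : ‖z₁‖ < 1) :
    wirt N (fun z => hEnt N m z 0 1) (fun i => if i = 0 then z₁ else 0) 1 ≠
      wirt N (fun z => hEnt N m z 1 1) (fun i => if i = 0 then z₁ else 0) 0 := by
  have hp : (fun i : Fin (N + 2) => if i = 0 then z₁ else 0) = Pi.single 0 z₁ := by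
    ext i; simp [Pi.single_apply]
  have hmem : Pi.single 0 z₁ ∈ E2m N m := by
    have : ‖z₁‖ ^ (2 * m) < 1 := Real.rpow_lt_one (norm_nonneg _) hz1 (by positivity)
    have hsum := sum_Ioi_norm_sq_eq_zero (N := N) (z := Pi.single 0 z₁) fun l hl => by simp [hl]
    simpa only [E2m, Set.mem_ofPred_eq, hsum, Pi.single_eq_same, add_zero] using this
  have hp₀ : (Pi.single 0 z₁ : Fin (N + 2) → ℂ) 0 ≠ 0 := by simpa using hz0
  have hs₀ : 0 < normSq z₁ := by rw [normSq_eq_norm_sq]; positivity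
  have hs₁ : normSq z₁ < 1 := by rw [normSq_eq_norm_sq]; nlinarith
  rw [hp, wirt_eq_wirtinger_update (differentiableAt_hEnt hm0 hmem hp₀ 0 1),
    wirt_eq_wirtinger_update (differentiableAt_hEnt hm0 hmem hp₀ 1 1), Pi.single_eq_same,
    Pi.single_eq_of_ne Fin.zero_lt_one.ne', wirtinger_hEnt_update_one_zero_one hm0 hs₁,
    wirtinger_hEnt_update_zero_one_one hm0 hs₀ hs₁]
  intro h
  refine (one_div_mul_one_sub_sq_lt hm0 (by linarith) hs₀ hs₁).ne ?_
  exact_mod_cast mul_right_cancel₀ (by simpa using hz0.ne' : conj z₁ ≠ 0) h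
end
end
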